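/- arXiv:2303.03079 — 8 statements merged into one kernel-verified Lean document; each statement's English description precedes it below -/
import Mathlib

section
/- Let F_q be a finite field, let n and k be positive integers, and let H_X and H_Z be k×n matrices over F_q. Let C ⊆ F_q^{2n} be the row space of the k×2n matrix (H_X | H_Z). Then rank(H_X·H_Zᵀ − H_Z·H_Xᵀ) = dim_{F_q} C − dim_{F_q}(C ∩ C^{⊥s}). -/
open Matrix

/-- The dual of a subspace `C ⊆ F^n × F^n` with respect to the symplectic product
`(x|y)·ₛ(z|w) = x·w - z·y`. -/
def sympDual {F : Type*} [Field F] {n : ℕ}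
    (C : Submodule F ((Fin n → F) × (Fin n → F))) :
    Submodule F ((Fin n → F) × (Fin n → F)) where
  carrier := { v | ∀ u ∈ C, u.1 ⬝ᵥ v.2 - v.1 ⬝ᵥ u.2 = 0 }
  add_mem' := by
    intro a b ha hb u hu
    have h1 := ha u hu
    have h2 := hb u hu
    simp only [Prod.fst_add, Prod.snd_add, dotProduct_add, add_dotProduct]
    linear_combination h1 + h2
  zero_mem' := by
    intro u hu
    simp
  smul_mem' := by
    intro c v hv u hu
    have h := hv u hu
    simp only [Prod.smul_fst, Prod.smul_snd, dotProduct_smul, smul_dotProduct,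
      smul_eq_mul]
    linear_combination c * h

/-!
With `g i = (H_X i | H_Z i)` and `B` the symplectic form, the matrix `H_X H_Zᵀ - H_Z H_Xᵀ` is
the Gram matrix `(B (g i) (g j))`. A Gram matrix factors as `v ↦ (B (g i) v)ᵢ` composed with
`x ↦ ∑ xⱼ gⱼ`; the latter has image `C`, and the kernel of the former is `C^⊥`, so rank–nullity
on `C` gives `rank = dim C - dim (C ∩ C^⊥)`.
-/

open Module

theorem Submodule.finrank_map_add_finrank_inf_ker {K V W : Type*} [Field K] [AddCommGroup V]
    [Module K V] [AddCommGroup W] [Module K W] (f : V →ₗ[K] W) (C : Submodule K V)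
    [FiniteDimensional K C] :
    finrank K (C.map f) + finrank K ↥(C ⊓ LinearMap.ker f) = finrank K C := by
  have h := (f.domRestrict C).finrank_range_add_finrank_ker
  rwa [LinearMap.range_domRestrict, LinearMap.ker_domRestrict,
    ← Submodule.finrank_map_subtype_eq, Submodule.map_comap_subtype] at h

namespace LinearMap.BilinForm

variable {K V ι : Type*} [Field K] [AddCommGroup V] [Module K V]

theorem ker_pi_eq_orthogonal_span (B : LinearMap.BilinForm K V) (g : ι → V) :
    LinearMap.ker (LinearMap.pi fun i => B (g i)) =
      B.orthogonal (Submodule.span K (Set.range g)) := by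
  ext v
  change _ ↔ Submodule.span K (Set.range g) ≤ LinearMap.ker (B.flip v)
  simp [Submodule.span_le, Set.range_subset_iff, funext_iff]

theorem mulVecLin_gram [Fintype ι] (B : LinearMap.BilinForm K V) (g : ι → V) :
    (Matrix.of fun i j => B (g i) (g j)).mulVecLin =
      (LinearMap.pi fun i => B (g i)) ∘ₗ Fintype.linearCombination K g := by
  ext x i
  simp [Matrix.mulVec, dotProduct, Fintype.linearCombination_apply, map_sum, mul_comm]

theorem rank_gram [Fintype ι] (B : LinearMap.BilinForm K V) (g : ι → V) :
    (Matrix.of fun i j => B (g i) (g j)).rank =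
      finrank K (Submodule.span K (Set.range g)) -
        finrank K ↥(Submodule.span K (Set.range g) ⊓
          B.orthogonal (Submodule.span K (Set.range g))) := by
  have := FiniteDimensional.span_of_finite K (Set.finite_range g)
  have h := (Submodule.span K (Set.range g)).finrank_map_add_finrank_inf_ker
    (LinearMap.pi fun i => B (g i))
  rw [ker_pi_eq_orthogonal_span] at h
  rw [Matrix.rank, mulVecLin_gram, LinearMap.range_comp, Fintype.range_linearCombination]
  omega

end LinearMap.BilinForm

def symplecticForm (K n : Type*) [Field K] [Fintype n] :
    LinearMap.BilinForm K ((n → K) × (n → K)) :=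
  LinearMap.mk₂ K (fun u v => u.1 ⬝ᵥ v.2 - v.1 ⬝ᵥ u.2)
    (fun u u' v => by
      simp only [Prod.fst_add, Prod.snd_add, add_dotProduct, dotProduct_add]; ring)
    (fun c u v => by
      simp only [Prod.smul_fst, Prod.smul_snd, smul_dotProduct, dotProduct_smul, smul_eq_mul]
      ring)
    (fun u v v' => by
      simp only [Prod.fst_add, Prod.snd_add, add_dotProduct, dotProduct_add]; ring)
    (fun c u v => by
      simp only [Prod.smul_fst, Prod.smul_snd, smul_dotProduct, dotProduct_smul, smul_eq_mul]
      ring)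

theorem sympDual_eq_orthogonal {F : Type*} [Field F] {n : ℕ}
    (C : Submodule F ((Fin n → F) × (Fin n → F))) :
    sympDual C = (symplecticForm F (Fin n)).orthogonal C :=
  rfl

theorem stmt_0_general {F : Type*} [Field F] {n k : ℕ}
    (HX HZ : Matrix (Fin k) (Fin n) F)
    (C : Submodule F ((Fin n → F) × (Fin n → F)))
    (hC : C = Submodule.span F (Set.range fun i : Fin k => (HX i, HZ i))) :
    (HX * HZᵀ - HZ * HXᵀ).rank =
      Module.finrank F C - Module.finrank F ↥(C ⊓ sympDual C) := by
  subst hC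
  rw [sympDual_eq_orthogonal, ← LinearMap.BilinForm.rank_gram]
  congr
  ext i j
  simp [Matrix.mul_apply', dotProduct_comm (HX j)]

/-- For the row space `C` of `(H_X | H_Z)`,
`rank (H_X·H_Zᵀ - H_Z·H_Xᵀ) = dim C - dim (C ∩ C^⊥ₛ)`. -/
theorem stmt_0 {F : Type*} [Field F] [Fintype F] {n k : ℕ} (hn : 0 < n) (hk : 0 < k)
    (HX HZ : Matrix (Fin k) (Fin n) F)
    (C : Submodule F ((Fin n → F) × (Fin n → F)))
    (hC : C = Submodule.span F (Set.range fun i : Fin k => (HX i, HZ i))) :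
    (HX * HZᵀ - HZ * HXᵀ).rank =
      Module.finrank F C - Module.finrank F ↥(C ⊓ sympDual C) :=
  stmt_0_general HX HZ C hC
end

section
/- Let F_q be a finite field and let n, r, t, t_ℓ be positive integers with t_ℓ ≤ t. Let B_r be an r×n matrix over F_q and let B_t be a t×n matrix over F_q obtained by stacking a t_ℓ×n matrix B_{t_ℓ} on top of a (t−t_ℓ)×n matrix B_{t_Q}. Assume B_r·B_tᵀ = 0, B_{t_Q}·B_{t_ℓ}ᵀ = 0, B_{t_Q}·B_{t_Q}ᵀ = 0, and that Z := B_{t_ℓ}·B_{t_ℓ}ᵀ is invertible. Let A_0 be a t_ℓ×t_ℓ matrix and A_1 a (t−t_ℓ)×(t−t_ℓ) matrix over F_q, and let A be the t×t block-diagonal matrix with diagonal blocks A_0·Z^{−1} and A_1. Then the (t+2r)×(t+2r) block matrix M := [[B_tB_tᵀAᵀ − A B_tB_tᵀ, −A B_tB_rᵀ, B_tB_rᵀ], [B_rB_tᵀAᵀ, 0, B_rB_rᵀ], [−B_rB_tᵀ, −B_rB_rᵀ, 0]] satisfies rank M = rank(A_0 − A_0ᵀ) + 2·rank(B_r·B_rᵀ),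 and the (r+t)×(r+t) block matrix [[B_rB_rᵀ, B_rB_tᵀ], [B_tB_rᵀ, B_tB_tᵀ]] has rank equal to rank(B_r·B_rᵀ) + t_ℓ. -/
/-!
The orthogonality relations give `B_r B_tᵀ = 0` and `B_t B_tᵀ = diag(Z, 0)`, so both matrices
become block diagonal; the lower right block of `M` is `diag(B_r B_rᵀ, -B_r B_rᵀ)` up to swapping
its column blocks. In the upper left block of `M` the factor `Z⁻¹` in `A` cancels against `Z`,
leaving `diag(A₀ᵀ - A₀, 0)`.
-/

open Matrix

def Submodule.prodEquiv {R M N : Type*} [Semiring R] [AddCommMonoid M] [AddCommMonoid N]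
    [Module R M] [Module R N] (p : Submodule R M) (q : Submodule R N) :
    p.prod q ≃ₗ[R] p × q where
  toFun x := (⟨x.1.1, x.2.1⟩, ⟨x.1.2, x.2.2⟩)
  invFun x := ⟨(x.1.1, x.2.1), x.1.2, x.2.2⟩
  map_add' _ _ := rfl
  map_smul' _ _ := rfl

namespace Matrix

variable {R : Type*} [CommRing R] {l m n o : Type*} [Fintype n] [Fintype o]

theorem rank_neg (A : Matrix m n R) : (-A).rank = A.rank := by
  have : (-A).mulVecLin = -A.mulVecLin := by ext; simp
  rw [rank, rank, this, LinearMap.range_neg]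

theorem rank_fromBlocks_zero₁₂_zero₂₁ {K : Type*} [Field K] (A : Matrix l n K) (D : Matrix m o K) :
    (fromBlocks A 0 0 D).rank = A.rank + D.rank := by
  let eDom := LinearEquiv.sumArrowLequivProdArrow n o K K
  let eCod := LinearEquiv.sumArrowLequivProdArrow l m K K
  have : (fromBlocks A 0 0 D).mulVecLin =
      eCod.symm.toLinearMap ∘ₗ A.mulVecLin.prodMap D.mulVecLin ∘ₗ eDom.toLinearMap := by
    refine LinearMap.ext fun v ↦ funext fun i ↦ ?_
    cases i <;> simp [eDom, eCod, fromBlocks_mulVec, LinearEquiv.sumArrowLequivProdArrow,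
      Equiv.sumArrowEquivProdArrow]
  rw [rank, this, LinearMap.range_comp,
    LinearMap.range_comp_of_range_eq_top _ (LinearEquiv.range _),
    LinearMap.range_prodMap, LinearEquiv.finrank_map_eq, (Submodule.prodEquiv _ _).finrank_eq,
    Module.finrank_prod, rank, rank]

theorem rank_fromBlocks_zero₁₁_zero₂₂ {K : Type*} [Field K] (B : Matrix l o K) (C : Matrix m n K) :
    (fromBlocks 0 B C 0).rank = B.rank + C.rank := by
  rw [← rank_fromBlocks_zero₁₂_zero₂₁, ← rank_submatrix _ (Equiv.refl _) (Equiv.sumComm o n)]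
  simp

theorem fromRows_mul_transpose_fromRows_of_mul_transpose_eq_zero
    (B₁ : Matrix l n R) (B₂ : Matrix m n R) (h₂₁ : B₂ * B₁ᵀ = 0) (h₂₂ : B₂ * B₂ᵀ = 0) :
    fromRows B₁ B₂ * (fromRows B₁ B₂)ᵀ = fromBlocks (B₁ * B₁ᵀ) 0 0 0 := by
  have h₁₂ : B₁ * B₂ᵀ = 0 := by simpa using congrArg transpose h₂₁
  rw [transpose_fromRows, fromRows_mul_fromCols, h₁₂, h₂₁, h₂₂]

theorem fromBlocks_mul_transpose_sub_mul_fromBlocks [Fintype l] [DecidableEq l] [Fintype m]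
    (Z : Matrix l l R) (hZsymm : Zᵀ = Z) (hZ : IsUnit Z) (A₀ : Matrix l l R) (A₁ : Matrix m m R) :
    fromBlocks Z 0 0 0 * (fromBlocks (A₀ * Z⁻¹) 0 0 A₁)ᵀ
        - fromBlocks (A₀ * Z⁻¹) 0 0 A₁ * fromBlocks Z 0 0 0
      = fromBlocks (A₀ᵀ - A₀) 0 0 0 := by
  have hZdet := (isUnit_iff_isUnit_det Z).mp hZ
  have hleft : Z * (A₀ * Z⁻¹)ᵀ = A₀ᵀ := by
    rw [transpose_mul, transpose_nonsing_inv, hZsymm, ← Matrix.mul_assoc,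
      mul_nonsing_inv _ hZdet, Matrix.one_mul]
  have hright : A₀ * Z⁻¹ * Z = A₀ := by
    rw [Matrix.mul_assoc, nonsing_inv_mul _ hZdet, Matrix.mul_one]
  rw [fromBlocks_transpose, fromBlocks_multiply, fromBlocks_multiply, hleft, hright]
  ext (i | i) (j | j) <;> simp

end Matrix

theorem stmt_5_general {F : Type*} [Field F] {n r t tl : ℕ}
    (Br : Matrix (Fin r) (Fin n) F)
    (Btl : Matrix (Fin tl) (Fin n) F) (BtQ : Matrix (Fin (t - tl)) (Fin n) F)
    (Bt : Matrix (Fin tl ⊕ Fin (t - tl)) (Fin n) F)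
    (hBt : Bt = Matrix.fromRows Btl BtQ)
    (h1 : Br * Btᵀ = 0) (h2 : BtQ * Btlᵀ = 0) (h3 : BtQ * BtQᵀ = 0)
    (Z : Matrix (Fin tl) (Fin tl) F) (hZ : Z = Btl * Btlᵀ) (hZinv : IsUnit Z)
    (A0 : Matrix (Fin tl) (Fin tl) F) (A1 : Matrix (Fin (t - tl)) (Fin (t - tl)) F)
    (A : Matrix (Fin tl ⊕ Fin (t - tl)) (Fin tl ⊕ Fin (t - tl)) F)
    (hA : A = Matrix.fromBlocks (A0 * Z⁻¹) 0 0 A1) :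
    (Matrix.fromBlocks (Bt * Btᵀ * Aᵀ - A * (Bt * Btᵀ))
        (Matrix.fromCols (-(A * (Bt * Brᵀ))) (Bt * Brᵀ))
        (Matrix.fromRows (Br * Btᵀ * Aᵀ) (-(Br * Btᵀ)))
        (Matrix.fromBlocks 0 (Br * Brᵀ) (-(Br * Brᵀ)) 0)).rank
      = (A0 - A0ᵀ).rank + 2 * (Br * Brᵀ).rank ∧
    (Matrix.fromBlocks (Br * Brᵀ) (Br * Btᵀ) (Bt * Brᵀ) (Bt * Btᵀ)).rank
      = (Br * Brᵀ).rank + tl := by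
  have h1' : Bt * Brᵀ = 0 := by simpa using congrArg transpose h1
  have hgram : Bt * Btᵀ = fromBlocks Z 0 0 0 := by
    rw [hBt, fromRows_mul_transpose_fromRows_of_mul_transpose_eq_zero Btl BtQ h2 h3, hZ]
  have hZsymm : Zᵀ = Z := by rw [hZ, transpose_mul, transpose_transpose]
  constructor
  · rw [h1, h1', hgram, hA, fromBlocks_mul_transpose_sub_mul_fromBlocks Z hZsymm hZinv, ← neg_sub]
    simp only [Matrix.mul_zero, Matrix.zero_mul, neg_zero, fromCols_zero, fromRows_zero]
    rw [rank_fromBlocks_zero₁₂_zero₂₁, rank_fromBlocks_zero₁₂_zero₂₁, rank_fromBlocks_zero₁₁_zero₂₂,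
      rank_neg, rank_neg, rank_zero, two_mul, add_zero]
  · rw [h1, h1', hgram, rank_fromBlocks_zero₁₂_zero₂₁, rank_fromBlocks_zero₁₂_zero₂₁, rank_zero,
      rank_of_isUnit Z hZinv, Fintype.card_fin, add_zero]

/-- With `B_t` the stack of `B_{t_ℓ}` over `B_{t_Q}`, `B_r·B_tᵀ = 0`,
`B_{t_Q}·B_{t_ℓ}ᵀ = 0`, `B_{t_Q}·B_{t_Q}ᵀ = 0`, `Z = B_{t_ℓ}·B_{t_ℓ}ᵀ` invertible, and
`A` block-diagonal with blocks `A_0·Z⁻¹` and `A_1`, the block matrix `M` of the Steane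
enlargement has rank `rank(A_0 - A_0ᵀ) + 2·rank(B_r·B_rᵀ)`, and the block matrix
`[[B_rB_rᵀ, B_rB_tᵀ], [B_tB_rᵀ, B_tB_tᵀ]]` has rank `rank(B_r·B_rᵀ) + t_ℓ`. -/
theorem stmt_5 {F : Type*} [Field F] [Fintype F] {n r t tl : ℕ}
    (hn : 0 < n) (hr : 0 < r) (ht : 0 < t) (htl : 0 < tl) (hle : tl ≤ t)
    (Br : Matrix (Fin r) (Fin n) F)
    (Btl : Matrix (Fin tl) (Fin n) F) (BtQ : Matrix (Fin (t - tl)) (Fin n) F)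
    (Bt : Matrix (Fin tl ⊕ Fin (t - tl)) (Fin n) F)
    (hBt : Bt = Matrix.fromRows Btl BtQ)
    (h1 : Br * Btᵀ = 0) (h2 : BtQ * Btlᵀ = 0) (h3 : BtQ * BtQᵀ = 0)
    (Z : Matrix (Fin tl) (Fin tl) F) (hZ : Z = Btl * Btlᵀ) (hZinv : IsUnit Z)
    (A0 : Matrix (Fin tl) (Fin tl) F) (A1 : Matrix (Fin (t - tl)) (Fin (t - tl)) F)
    (A : Matrix (Fin tl ⊕ Fin (t - tl)) (Fin tl ⊕ Fin (t - tl)) F)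
    (hA : A = Matrix.fromBlocks (A0 * Z⁻¹) 0 0 A1) :
    (Matrix.fromBlocks (Bt * Btᵀ * Aᵀ - A * (Bt * Btᵀ))
        (Matrix.fromCols (-(A * (Bt * Brᵀ))) (Bt * Brᵀ))
        (Matrix.fromRows (Br * Btᵀ * Aᵀ) (-(Br * Btᵀ)))
        (Matrix.fromBlocks 0 (Br * Brᵀ) (-(Br * Brᵀ)) 0)).rank
      = (A0 - A0ᵀ).rank + 2 * (Br * Brᵀ).rank ∧
    (Matrix.fromBlocks (Br * Brᵀ) (Br * Btᵀ) (Bt * Brᵀ) (Bt * Btᵀ)).rank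
      = (Br * Brᵀ).rank + tl :=
  stmt_5_general Br Btl BtQ Bt hBt h1 h2 h3 Z hZ hZinv A0 A1 A hA
end

section
/- Let F_q be a finite field, let j ≥ 2 be an integer, let a_0, …, a_{j−1} ∈ F_q, and let L_j be the companion matrix of h(X) = X^j + a_{j−1}X^{j−1} + ⋯ + a_1X + a_0. Then rank(L_j − L_jᵀ) ≥ j − 2. -/
open Matrix

/-- The companion matrix of the monic polynomial
`X^j + a_{j-1}X^{j-1} + ⋯ + a_1 X + a_0`: the `(i, i+1)` entries are `1`, the last row is
`(-a_0, …, -a_{j-1})`, and all other entries are `0`. -/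
def companion {F : Type*} [Field F] (j : ℕ) (a : Fin j → F) : Matrix (Fin j) (Fin j) F :=
  Matrix.of fun i k =>
    if (i : ℕ) = j - 1 then -a k else if (k : ℕ) = (i : ℕ) + 1 then 1 else 0

/-! The minor of `L - Lᵀ` on rows `1, …, j-2` and columns `0, …, j-3` has entries
`[c = r + 2] - [c = r]`: it avoids the last row and the last column, the only places where the
coefficients `a_k` appear. This minor is upper triangular with `-1` on the diagonal, hence
invertible, and the rank of a matrix is at least that of any of its submatrices. -/

theorem Matrix.rank_eq_card_of_isUpperTriangular {n R : Type*} [Fintype n] [LinearOrder n]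
    [CommRing R] [IsDomain R] {A : Matrix n n R} (hA : A.IsUpperTriangular)
    (hd : ∀ i, A i i ≠ 0) : A.rank = Fintype.card n := by
  classical
  rw [← rank_one (R := R) (n := n), ← rank_mul_eq_right_of_isUpperTriangular A 1 hA hd, mul_one]

section

variable {F : Type*} [Field F] {j : ℕ}

theorem companion_sub_transpose_submatrix_apply (a : Fin j → F) (r c : Fin (j - 2)) :
    (companion j a - (companion j a)ᵀ).submatrix
        (fun r : Fin (j - 2) => ⟨r + 1, by omega⟩) (fun c : Fin (j - 2) => ⟨c, by omega⟩) r c =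
      (if (c : ℕ) = r + 2 then 1 else 0) - (if (c : ℕ) = r then 1 else 0) := by
  have hr := r.isLt
  have hc := c.isLt
  have hrow : (r : ℕ) + 1 ≠ j - 1 := by omega
  have hcol : (c : ℕ) ≠ j - 1 := by omega
  simp only [submatrix_apply, Matrix.sub_apply, transpose_apply, companion, of_apply, hrow, hcol,
    if_false]
  congr 1
  exact if_congr (by omega) rfl rfl

theorem rank_companion_sub_transpose_submatrix (a : Fin j → F) :
    ((companion j a - (companion j a)ᵀ).submatrix
        (fun r : Fin (j - 2) => ⟨r + 1, by omega⟩) (fun c : Fin (j - 2) => ⟨c, by omega⟩)).rank =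
      j - 2 := by
  refine (rank_eq_card_of_isUpperTriangular (fun r c hcr => ?_) (fun r => ?_)).trans
    (Fintype.card_fin _)
  · have : (c : ℕ) < r := hcr
    rw [companion_sub_transpose_submatrix_apply, if_neg (by omega), if_neg (by omega), sub_zero]
  · rw [companion_sub_transpose_submatrix_apply, if_neg (by omega), if_pos rfl]
    simp

end

theorem stmt_6_general {F : Type*} [Field F] {j : ℕ} (a : Fin j → F) :
    j - 2 ≤ (companion j a - (companion j a)ᵀ).rank :=
  rank_companion_sub_transpose_submatrix a ▸ rank_submatrix_le _ _ _

/-- For `j ≥ 2`, the companion matrix `L_j` of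
`X^j + a_{j-1}X^{j-1} + ⋯ + a_0` satisfies `rank (L_j - L_jᵀ) ≥ j - 2`. -/
theorem stmt_6 {F : Type*} [Field F] [Fintype F] {j : ℕ} (hj : 2 ≤ j) (a : Fin j → F) :
    j - 2 ≤ (companion j a - (companion j a)ᵀ).rank :=
  stmt_6_general a
end

section
/- Let F_q be a finite field, let j ≥ 2 be an odd integer, let a_0, …, a_{j−1} ∈ F_q, and let L_j be the companion matrix of h(X) = X^j + a_{j−1}X^{j−1} + ⋯ + a_1X + a_0. Then rank(L_j − L_jᵀ) = j − 1. -/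
/-!
Write `j = n + 1` with `n` even and `M = L - Lᵀ`. For `i < n`, row `i` of `M` applied to `w`
is `w (i + 1) - w (i - 1) + a i * w n` (no `w (i - 1)` term for `i = 0`). Hence a vector killed
by the first `n` rows with `w n = 0` vanishes: the recursion `w (i + 2) = w i` propagates
`w 1 = 0` to the odd entries and `w n = 0` to the even ones. A dimension count gives `v ≠ 0`
killed by the first `n` rows, so `v n ≠ 0`; as `M` is skew, `v ⬝ᵥ M v = v n * (M v) n = 0`,
so `M v = 0`. Therefore `ker M` is the line through `v`.
-/

open Matrix

theorem Matrix.dotProduct_sub_transpose_mulVec_self {R n : Type*} [CommRing R] [Fintype n]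
    (A : Matrix n n R) (v : n → R) : v ⬝ᵥ ((A - Aᵀ) *ᵥ v) = 0 := by
  rw [sub_mulVec, dotProduct_sub, dotProduct_mulVec, ← mulVec_transpose, dotProduct_comm,
    sub_self]

theorem Matrix.sub_transpose_mulVec_eq_zero {R n : Type*} [CommRing R] [NoZeroDivisors R]
    [Fintype n] (A : Matrix n n R) {v : n → R} {i₀ : n} (hv : v i₀ ≠ 0)
    (h : ∀ i ≠ i₀, ((A - Aᵀ) *ᵥ v) i = 0) : (A - Aᵀ) *ᵥ v = 0 := by
  have hdot := dotProduct_sub_transpose_mulVec_self A v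
  rw [dotProduct, Finset.sum_eq_single i₀ (fun i _ hi => by rw [h i hi, mul_zero])
    (fun h => absurd (Finset.mem_univ _) h)] at hdot
  funext i
  by_cases hi : i = i₀
  · subst hi; exact (mul_eq_zero.1 hdot).resolve_left hv
  · exact h i hi

theorem Matrix.exists_ne_zero_mulVec_eq_zero_of_card_lt {K m n : Type*} [Field K] [Fintype m]
    [Fintype n] (A : Matrix m n K) (h : Fintype.card m < Fintype.card n) :
    ∃ v ≠ 0, A *ᵥ v = 0 := by
  obtain ⟨v, hv, hv0⟩ := (Submodule.ne_bot_iff _).1 <|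
    LinearMap.ker_ne_bot_of_finrank_lt (f := A.mulVecLin) (by simpa using h)
  exact ⟨v, hv0, hv⟩

theorem Nat.apply_eq_apply_mod_two {α : Type*} {u : ℕ → α} {n : ℕ}
    (h : ∀ i, i + 2 ≤ n → u (i + 2) = u i) : ∀ k ≤ n, u k = u (k % 2)
  | 0, _ => rfl
  | 1, _ => rfl
  | k + 2, hk => by rw [h k hk, Nat.add_mod_right]; exact Nat.apply_eq_apply_mod_two h k (by omega)

section

variable {F : Type*} [Field F] {n : ℕ}

theorem companion_sub_transpose_apply (a : Fin (n + 1) → F) {i : Fin (n + 1)} (hi : (i : ℕ) < n)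
    (k : Fin (n + 1)) :
    (companion (n + 1) a - (companion (n + 1) a)ᵀ) i k =
      (if (k : ℕ) = i + 1 then 1 else 0) - (if (k : ℕ) + 1 = i then 1 else 0) +
        if (k : ℕ) = n then a i else 0 := by
  simp only [Matrix.sub_apply, transpose_apply, companion, of_apply, Nat.add_sub_cancel]
  split_ifs <;> first | (exfalso; omega) | ring

theorem companion_sub_transpose_mulVec_apply (a : Fin (n + 1) → F) (u : ℕ → F) {i : ℕ}
    (hi : i < n) :
    ((companion (n + 1) a - (companion (n + 1) a)ᵀ) *ᵥ fun k => u k) ⟨i, by omega⟩ =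
      u (i + 1) - (if i = 0 then 0 else u (i - 1)) + a ⟨i, by omega⟩ * u n := by
  simp only [mulVec, dotProduct, companion_sub_transpose_apply a (i := ⟨i, _⟩) hi]
  rw [Fin.sum_univ_eq_sum_range (fun k => ((if k = i + 1 then 1 else 0) -
    (if k + 1 = i then 1 else 0) + if k = n then a ⟨i, by omega⟩ else 0) * u k)]
  simp only [add_mul, sub_mul, ite_mul, one_mul, zero_mul, Finset.sum_add_distrib,
    Finset.sum_sub_distrib, Finset.sum_ite_eq', Finset.mem_range]
  rw [if_pos (by omega), if_pos n.lt_add_one]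
  congr 2
  rcases i with _ | i
  · simp
  · simp [Finset.sum_ite_eq', show i < n + 1 by omega]

theorem eq_zero_of_companion_sub_transpose_mulVec (hn : Even n) (a : Fin (n + 1) → F)
    {w : Fin (n + 1) → F}
    (hrows : ∀ i : Fin n,
      ((companion (n + 1) a - (companion (n + 1) a)ᵀ) *ᵥ w) i.castSucc = 0)
    (hlast : w (Fin.last n) = 0) : w = 0 := by
  set u : ℕ → F := fun k => if h : k < n + 1 then w ⟨k, h⟩ else 0
  have hw : w = fun k : Fin (n + 1) => u k := by funext k; simp only [u, dif_pos k.isLt]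
  have hun : u n = 0 := by simpa [u, Fin.last] using hlast
  have hrow : ∀ i (hi : i < n), u (i + 1) - (if i = 0 then 0 else u (i - 1)) = 0 := by
    intro i hi
    have := hrows ⟨i, hi⟩
    rw [hw, Fin.castSucc_mk, companion_sub_transpose_mulVec_apply a u hi, hun, mul_zero,
      add_zero] at this
    exact this
  have hmod := Nat.apply_eq_apply_mod_two (u := u) (n := n) fun i hi => by
    simpa [sub_eq_zero] using hrow (i + 1) (by omega)
  have hu0 : u 0 = 0 := by rw [← hun, hmod n le_rfl, Nat.even_iff.1 hn]
  rw [hw]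
  funext k
  rw [hmod k (by omega)]
  rcases Nat.mod_two_eq_zero_or_one k with h | h
  · rw [h, hu0]; rfl
  · rw [h]; simpa using hrow 0 (by omega)

end

theorem stmt_7_general {F : Type*} [Field F] {j : ℕ} (hodd : Odd j)
    (a : Fin j → F) :
    (companion j a - (companion j a)ᵀ).rank = j - 1 := by
  obtain ⟨m, rfl⟩ := hodd
  set M := companion (2 * m + 1) a - (companion (2 * m + 1) a)ᵀ
  have hker_of_last : ∀ w : Fin (2 * m + 1) → F,
      (∀ i : Fin (2 * m), (M *ᵥ w) i.castSucc = 0) → w (Fin.last _) = 0 → w = 0 :=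
    fun _ => eq_zero_of_companion_sub_transpose_mulVec (even_two_mul m) a
  obtain ⟨v, hv0, hvrows⟩ :=
    (M.submatrix Fin.castSucc id).exists_ne_zero_mulVec_eq_zero_of_card_lt (by simp)
  have hvlast : v (Fin.last _) ≠ 0 := fun h => hv0 (hker_of_last v (congrFun hvrows) h)
  have hMv : M *ᵥ v = 0 := by
    refine sub_transpose_mulVec_eq_zero _ hvlast fun i hi => ?_
    obtain ⟨i, rfl⟩ := Fin.exists_castSucc_eq.2 hi
    exact congrFun hvrows i
  have hker : LinearMap.ker M.mulVecLin = Submodule.span F {v} := by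
    refine le_antisymm (fun w hw => ?_) ((Submodule.span_singleton_le_iff_mem _ _).2 hMv)
    rw [LinearMap.mem_ker, mulVecLin_apply] at hw
    refine Submodule.mem_span_singleton.2 ⟨w (Fin.last _) / v (Fin.last _), ?_⟩
    refine (sub_eq_zero.1 (hker_of_last _ (fun i => ?_) ?_)).symm
    · simp [mulVec_sub, mulVec_smul, hw, hMv]
    · simp [hvlast]
  have := LinearMap.finrank_range_add_finrank_ker M.mulVecLin
  rw [hker, finrank_span_singleton hv0, Module.finrank_fin_fun] at this
  exact Nat.eq_sub_of_add_eq this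

/-- For odd `j ≥ 2`, the companion matrix `L_j` of
`X^j + a_{j-1}X^{j-1} + ⋯ + a_0` satisfies `rank (L_j - L_jᵀ) = j - 1`. -/
theorem stmt_7 {F : Type*} [Field F] [Fintype F] {j : ℕ} (hj : 2 ≤ j) (hodd : Odd j)
    (a : Fin j → F) :
    (companion j a - (companion j a)ᵀ).rank = j - 1 :=
  stmt_7_general hodd a
end

section
/- Let F_q be a finite field and let t ≥ 2 be an integer. Assume that either the characteristic of F_q is odd, or the characteristic of F_q is 2 and t > 2. Then there exists a nonzero element ξ₁ ∈ F_q such that the polynomial X^t − X^{t−2} − ξ₁ has no root in F_q, i.e., x^t − x^{t−2} ≠ ξ₁ for every x ∈ F_q. -/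
/-! The map `f x = x ^ t - x ^ (t - 2) = x ^ (t - 2) * (x ^ 2 - 1)` takes the value `0` at two
distinct points (`±1` in odd characteristic, `0` and `1` when `t > 2`), so it is not injective.
On a finite field it is then not surjective either, and any value it misses is nonzero. -/

open Function

theorem exists_forall_ne_of_not_injective {α : Type*} [Finite α] {f : α → α}
    (hf : ¬ Injective f) (a : α) : ∃ y, y ≠ f a ∧ ∀ x, f x ≠ y := by
  obtain ⟨y, hy⟩ : ∃ y, ∀ x, f x ≠ y := by
    simpa [Surjective] using mt Finite.injective_iff_surjective.mpr hf
  exact ⟨y, fun h => hy a h.symm, hy⟩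

theorem pow_sub_pow_sub_two_eq_mul {R : Type*} [CommRing R] {t : ℕ} (ht : 2 ≤ t) (x : R) :
    x ^ t - x ^ (t - 2) = x ^ (t - 2) * (x ^ 2 - 1) := by
  obtain ⟨k, rfl⟩ := Nat.exists_eq_add_of_le' ht
  simp only [Nat.add_sub_cancel]
  ring

theorem not_injective_pow_sub_pow_sub_two {F : Type*} [Field F] {t : ℕ} (ht : 2 ≤ t)
    (h : Odd (ringChar F) ∨ (ringChar F = 2 ∧ 2 < t)) :
    ¬ Injective fun x : F => x ^ t - x ^ (t - 2) := by
  intro hinj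
  have hf (x : F) := pow_sub_pow_sub_two_eq_mul ht x
  rcases h with hodd | ⟨-, ht2⟩
  · have hchar : ringChar F ≠ 2 := by
      rintro h2
      rw [h2] at hodd
      exact Nat.not_odd_iff_even.mpr even_two hodd
    refine Ring.neg_one_ne_one_of_char_ne_two hchar (hinj ?_)
    simp only [hf]
    norm_num
  · refine zero_ne_one (hinj ?_)
    simp only [hf]
    simp [zero_pow (by omega : t - 2 ≠ 0)]

/-- For a finite field `F` and `t ≥ 2`, with either odd characteristic,
or characteristic 2 and `t > 2`, there exists a nonzero `ξ₁ ∈ F` such that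
`X^t - X^(t-2) - ξ₁` has no root in `F`. -/
theorem stmt_11 {F : Type*} [Field F] [Fintype F] {t : ℕ} (ht : 2 ≤ t)
    (h : Odd (ringChar F) ∨ (ringChar F = 2 ∧ 2 < t)) :
    ∃ ξ₁ : F, ξ₁ ≠ 0 ∧ ∀ x : F, x ^ t - x ^ (t - 2) ≠ ξ₁ := by
  obtain ⟨ξ, hξ, hmiss⟩ := exists_forall_ne_of_not_injective
    (not_injective_pow_sub_pow_sub_two ht h) (1 : F)
  exact ⟨ξ, by simpa using hξ, hmiss⟩
end

section
/- Let p be a prime and let s, m be positive integers such that s divides m and s ≠ m. Set n = p^m − 1. Then for every integer b with 0 < b < B(p,m,s), the cyclotomic cosets I_b and I_{n−b} are disjoint; that is, b·p^{sℓ} mod n ≠ (n−b)·p^{sℓ'} mod n for all nonnegative integers ℓ, ℓ'. -/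
/-!
Write `q = p^s`, `t = m/s` and `N = q^t - 1 = p^m - 1`. If `b q^ℓ ≡ -b q^ℓ' (mod N)`,
multiplying by the inverse `q^((t-1)ℓ)` of `q^ℓ` gives `N ∣ b (q^k + 1)` for some `k < t`.
Then `N ∣ b (q^(2k) - 1)`, hence `N ∣ b · gcd(N, q^(2k) - 1) = b (q^g - 1)` with
`g = gcd(t, 2k)`. Unless `t ∣ 2k`, `g` is a proper divisor of `t`, so `g ≤ t/2` (and `g ≤ t/3`
for odd `t`), which is exactly what makes `B ≤ q^(t-g)`; then `b (q^g - 1) < q^t - q^(t-g) < N`.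
The remaining cases `k = 0` and `2k = t` give `N ∣ 2b` and `q^k - 1 ∣ b`, both impossible for
`0 < b < B`.
-/

/-- The bound `B(p,m,s)` from the paper: `(p^s)^(m/(2s)) - 1` if `m/s` is even, and
`(p^s)^⌈m/(2s)⌉ - p^s + 1` otherwise. -/
def Bval (p m s : ℕ) : ℕ :=
  if Even (m / s) then (p ^ s) ^ (m / (2 * s)) - 1
  else (p ^ s) ^ ((m + 2 * s - 1) / (2 * s)) - p ^ s + 1

def cosetBound (q t : ℕ) : ℕ :=
  if Even t then q ^ (t / 2) - 1 else q ^ ((t + 1) / 2) - q + 1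

lemma two_mul_le_of_dvd_of_lt {g t : ℕ} (hg : g ∣ t) (hgt : g < t) : 2 * g ≤ t := by
  obtain ⟨u, rfl⟩ := hg
  have : u ≠ 0 := by rintro rfl; simp at hgt
  have : u ≠ 1 := by rintro rfl; simp at hgt
  nlinarith [show 2 ≤ u by omega]

lemma three_mul_le_of_dvd_of_lt {g t : ℕ} (ht : Odd t) (hg : g ∣ t) (hgt : g < t) :
    3 * g ≤ t := by
  obtain ⟨u, rfl⟩ := hg
  have hu : Odd u := Nat.Odd.of_mul_right ht
  have : u ≠ 1 := by rintro rfl; simp at hgt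
  obtain ⟨v, rfl⟩ := hu
  nlinarith [show 1 ≤ v by omega]

lemma cosetBound_le_pow_sub {q t g : ℕ} (hq : 1 ≤ q) (hg : g ∣ t) (hgt : g < t) :
    cosetBound q t ≤ q ^ (t - g) := by
  unfold cosetBound
  split_ifs with ht
  · have := two_mul_le_of_dvd_of_lt hg hgt
    exact (Nat.sub_le _ _).trans (Nat.pow_le_pow_right hq (by omega))
  · have ht : Odd t := Nat.not_even_iff_odd.mp ht
    have := three_mul_le_of_dvd_of_lt ht hg hgt
    have : q ≤ q ^ ((t + 1) / 2) := Nat.le_self_pow (by omega) q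
    have : q ^ ((t + 1) / 2) ≤ q ^ (t - g) := Nat.pow_le_pow_right hq (by omega)
    omega

lemma mul_pow_sub_one_lt {q t g b : ℕ} (hq : 2 ≤ q) (hg : g ∣ t) (hgt : g < t) (ht : 0 < t)
    (hbB : b < cosetBound q t) : b * (q ^ g - 1) < q ^ t - 1 := by
  have hg0 : 0 < g := Nat.pos_of_dvd_of_pos hg ht
  have hqg : 2 ≤ q ^ g := le_trans hq (Nat.le_self_pow hg0.ne' q)
  have hqtg : 1 ≤ q ^ (t - g) := Nat.one_le_pow _ _ (by omega)
  have hsplit : q ^ (t - g) * q ^ g = q ^ t := by rw [← pow_add, Nat.sub_add_cancel hgt.le]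
  calc b * (q ^ g - 1) < q ^ (t - g) * (q ^ g - 1) :=
        Nat.mul_lt_mul_of_pos_right (hbB.trans_le (cosetBound_le_pow_sub (by omega) hg hgt))
          (by omega)
    _ = q ^ t - q ^ (t - g) := by rw [Nat.mul_sub_one, hsplit]
    _ ≤ q ^ t - 1 := by omega

lemma pow_two_mul_sub_one (q k : ℕ) : q ^ (2 * k) - 1 = (q ^ k + 1) * (q ^ k - 1) := by
  rw [two_mul, pow_add, mul_self_tsub_one]

lemma not_dvd_two_mul {q t b : ℕ} (hq : 2 ≤ q) (ht : 2 ≤ t) (hb : 0 < b)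
    (hbB : b < cosetBound q t) : ¬ q ^ t - 1 ∣ 2 * b := by
  have hB := cosetBound_le_pow_sub (by omega) (one_dvd t) (by omega : 1 < t) (q := q)
  have hsplit : q * q ^ (t - 1) = q ^ t := by rw [← pow_succ', Nat.sub_add_cancel (by omega)]
  have : 2 * q ^ (t - 1) ≤ q * q ^ (t - 1) := Nat.mul_le_mul_right _ hq
  intro hdvd
  have := Nat.le_of_dvd (by omega) hdvd
  omega

lemma not_dvd_mul_pow_half_add_one {q k b : ℕ} (hq : 2 ≤ q) (hb : 0 < b)
    (hbB : b < cosetBound q (2 * k)) : ¬ q ^ (2 * k) - 1 ∣ b * (q ^ k + 1) := by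
  rw [cosetBound, if_pos (even_two_mul k), Nat.mul_div_cancel_left _ two_pos] at hbB
  rw [pow_two_mul_sub_one, mul_comm b]
  intro hdvd
  have := Nat.le_of_dvd hb (Nat.dvd_of_mul_dvd_mul_left (by positivity) hdvd)
  omega

lemma not_dvd_mul_pow_add_one_of_not_dvd {q t k b : ℕ} (hq : 2 ≤ q) (ht : 0 < t) (hb : 0 < b)
    (hbB : b < cosetBound q t) (hk : ¬ t ∣ 2 * k) : ¬ q ^ t - 1 ∣ b * (q ^ k + 1) := by
  have hgt : Nat.gcd t (2 * k) < t := lt_of_le_of_ne (Nat.le_of_dvd ht (Nat.gcd_dvd_left _ _))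
    fun h => hk (h ▸ Nat.gcd_dvd_right _ _)
  have hg0 : 0 < Nat.gcd t (2 * k) := Nat.gcd_pos_of_pos_left _ ht
  have hqg : 2 ≤ q ^ Nat.gcd t (2 * k) := le_trans hq (Nat.le_self_pow hg0.ne' q)
  have hlt := mul_pow_sub_one_lt hq (Nat.gcd_dvd_left t (2 * k)) hgt ht hbB
  intro hdvd
  have hdvd' : q ^ t - 1 ∣ b * (q ^ (2 * k) - 1) :=
    hdvd.trans (mul_dvd_mul_left b (pow_two_mul_sub_one q k ▸ dvd_mul_right _ _))
  have hdvd'' : q ^ t - 1 ∣ b * Nat.gcd (q ^ t - 1) (q ^ (2 * k) - 1) :=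
    dvd_mul_gcd_of_dvd_mul hdvd'
  rw [Nat.pow_sub_one_gcd_pow_sub_one] at hdvd''
  have := Nat.le_of_dvd (Nat.mul_pos hb (by omega)) hdvd''
  omega

lemma not_dvd_mul_pow_add_one {q t k b : ℕ} (hq : 2 ≤ q) (ht : 2 ≤ t) (hk : k < t)
    (hb : 0 < b) (hbB : b < cosetBound q t) : ¬ q ^ t - 1 ∣ b * (q ^ k + 1) := by
  by_cases htk : t ∣ 2 * k
  · obtain ⟨c, hc⟩ := htk
    obtain rfl | rfl : c = 0 ∨ c = 1 := by
      have : t * c < t * 2 := by omega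
      have := Nat.lt_of_mul_lt_mul_left this
      omega
    · obtain rfl : k = 0 := by omega
      simpa [mul_comm b] using not_dvd_two_mul hq ht hb hbB
    · obtain rfl : t = 2 * k := by omega
      exact not_dvd_mul_pow_half_add_one hq hb hbB
  · exact not_dvd_mul_pow_add_one_of_not_dvd hq (by omega) hb hbB htk

lemma exists_dvd_mul_pow_add_one_of_mod_eq {q t b ℓ ℓ' : ℕ} (hq : 1 ≤ q) (ht : 0 < t)
    (hb : b ≤ q ^ t - 1)
    (h : b * q ^ ℓ % (q ^ t - 1) = (q ^ t - 1 - b) * q ^ ℓ' % (q ^ t - 1)) :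
    ∃ k < t, q ^ t - 1 ∣ b * (q ^ k + 1) := by
  have hqt : (q : ZMod (q ^ t - 1)) ^ t = 1 := by
    have h0 := ZMod.natCast_self (q ^ t - 1)
    rwa [Nat.cast_sub (Nat.one_le_pow _ _ hq), sub_eq_zero, Nat.cast_pow, Nat.cast_one] at h0
  have hinv : (q : ZMod (q ^ t - 1)) ^ ((t - 1) * ℓ) * (q : ZMod (q ^ t - 1)) ^ ℓ = 1 := by
    rw [← pow_add, ← add_one_mul, Nat.sub_one_add_one ht.ne', pow_mul, hqt, one_pow]
  rw [← ZMod.natCast_eq_natCast_iff'] at h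
  push_cast [Nat.cast_sub hb, ZMod.natCast_self] at h
  refine ⟨(ℓ' + (t - 1) * ℓ) % t, Nat.mod_lt _ ht, ?_⟩
  rw [← ZMod.natCast_eq_zero_iff]
  push_cast
  rw [← pow_eq_pow_mod _ hqt, pow_add]
  linear_combination (q : ZMod (q ^ t - 1)) ^ ((t - 1) * ℓ) * h - (b : ZMod (q ^ t - 1)) * hinv

lemma Bval_mul_eq_cosetBound (p : ℕ) {s : ℕ} (hs : 0 < s) (t : ℕ) :
    Bval p (s * t) s = cosetBound (p ^ s) t := by
  have h2 : s * t / (2 * s) = t / 2 := by rw [mul_comm 2 s, Nat.mul_div_mul_left _ _ hs]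
  have h3 : (s * t + 2 * s - 1) / (2 * s) = (t + 1) / 2 := by
    rw [mul_comm 2 s, ← Nat.div_div_eq_div_mul]
    congr 1
    rw [show s * t + s * 2 - 1 = s - 1 + s * (t + 1) by rw [mul_add, mul_one]; omega,
      Nat.add_mul_div_left _ _ hs, Nat.div_eq_of_lt (by omega), zero_add]
  rw [Bval, cosetBound, Nat.mul_div_cancel_left t hs, h2, h3]

/-- For `0 < b < B(p,m,s)` the cyclotomic cosets `I_b` and `I_{n-b}`
(with respect to `n = p^m - 1` and `s`) are disjoint. -/
theorem stmt_15 (p s m : ℕ) (hp : p.Prime) (hs : 0 < s) (hm : 0 < m)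
    (hsm : s ∣ m) (hne : s ≠ m) (b : ℕ) (hb : 0 < b) (hbB : b < Bval p m s) :
    ∀ ℓ ℓ' : ℕ,
      b * p ^ (s * ℓ) % (p ^ m - 1) ≠ ((p ^ m - 1) - b) * p ^ (s * ℓ') % (p ^ m - 1) := by
  intro ℓ ℓ' h
  obtain ⟨t, rfl⟩ := hsm
  have hq : 2 ≤ p ^ s := hp.two_le.trans (Nat.le_self_pow hs.ne' p)
  have ht : 2 ≤ t := by
    rcases t with _ | _ | t
    · simp at hm
    · simp at hne
    · omega
  rw [Bval_mul_eq_cosetBound p hs] at hbB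
  simp only [pow_mul] at h
  have hbq : b < (p ^ s) ^ t := hbB.trans_le <|
    (cosetBound_le_pow_sub (by omega) (one_dvd t) (by omega)).trans
      (Nat.pow_le_pow_right (by omega) (Nat.sub_le t 1))
  obtain ⟨k, hk, hdvd⟩ :=
    exists_dvd_mul_pow_add_one_of_mod_eq (by omega) (by omega) (by omega) h
  exact not_dvd_mul_pow_add_one hq ht hk hb hbB hdvd
end

section
/- Let p be a prime and let s, m be positive integers such that s divides m and s ≠ m. Set n = p^m − 1. Then for every integer b with 0 < b ≤ B(p,m,s), the cyclotomic coset I_b has exactly m/s elements; that is, the set { b·p^{sℓ} mod n : ℓ ≥ 0 } has cardinality m/s. -/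
/-- The coset `I_b` of the paper is `cyclotomicCoset (p ^ s) (p ^ m - 1) b`. -/
def cyclotomicCoset (q n b : ℕ) : Set ℕ := {x | ∃ ℓ : ℕ, x = b * q ^ ℓ % n}

lemma two_mul_le_of_dvd_of_lt_s16 {d t : ℕ} (hdt : d ∣ t) (hlt : d < t) : 2 * d ≤ t := by
  obtain ⟨c, rfl⟩ := hdt
  rcases c with _ | _ | c
  · omega
  · omega
  · nlinarith

section CyclotomicCoset

variable {q : ℕ}

lemma coprime_pow_sub_one (hq : 0 < q) {t : ℕ} (ht : 0 < t) : q.Coprime (q ^ t - 1) := by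
  have hqt : 1 ≤ q ^ t := Nat.one_le_pow t q hq
  refine Nat.Coprime.coprime_dvd_left (dvd_pow_self q ht.ne') ?_
  exact (Nat.coprime_self_sub_right hqt).mpr (Nat.coprime_one_right _)

lemma mul_pow_mod_pow_sub_one (hq : 0 < q) (b t ℓ : ℕ) :
    b * q ^ ℓ % (q ^ t - 1) = b * q ^ (ℓ % t) % (q ^ t - 1) := by
  have hqt : q ^ t ≡ 1 [MOD q ^ t - 1] := Nat.modEq_sub (Nat.one_le_pow t q hq)
  have h := ((hqt.pow (ℓ / t)).mul_right (q ^ (ℓ % t))).mul_left b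
  rwa [one_pow, one_mul, ← pow_mul, ← pow_add, Nat.div_add_mod] at h

lemma cyclotomicCoset_pow_sub_one_eq_image (hq : 0 < q) {t : ℕ} (ht : 0 < t) (b : ℕ) :
    cyclotomicCoset q (q ^ t - 1) b =
      (Finset.range t).image (fun ℓ => b * q ^ ℓ % (q ^ t - 1)) := by
  ext x
  simp only [cyclotomicCoset, Set.mem_ofPred_eq, Finset.coe_image, Finset.coe_range,
    Set.mem_image, Set.mem_Iio]
  constructor
  · rintro ⟨ℓ, rfl⟩
    exact ⟨ℓ % t, Nat.mod_lt ℓ ht, (mul_pow_mod_pow_sub_one hq b t ℓ).symm⟩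
  · rintro ⟨ℓ, -, rfl⟩
    exact ⟨ℓ, rfl⟩

lemma dvd_mul_pow_sub_one_of_modEq (hq : 0 < q) {n b i j : ℕ} (hqn : q.Coprime n) (hij : i ≤ j)
    (h : b * q ^ i ≡ b * q ^ j [MOD n]) : n ∣ b * (q ^ (j - i) - 1) := by
  rw [← Nat.add_sub_cancel' hij, pow_add, mul_left_comm, mul_comm b] at h
  rw [mul_tsub, mul_one]
  have h' : b ≡ b * q ^ (j - i) [MOD n] :=
    Nat.ModEq.cancel_left_of_coprime (Nat.Coprime.pow_left i hqn).symm h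
  exact (Nat.modEq_iff_dvd' (Nat.le_mul_of_pos_right b (Nat.one_le_pow _ _ hq))).mp h'

lemma dvd_mul_pow_gcd_sub_one {n b e t : ℕ} (he : n ∣ b * (q ^ e - 1))
    (ht : n ∣ b * (q ^ t - 1)) : n ∣ b * (q ^ Nat.gcd e t - 1) := by
  rw [← Nat.pow_sub_one_gcd_pow_sub_one, ← Nat.gcd_mul_left]
  exact Nat.dvd_gcd he ht

lemma pow_sub_lt_of_pow_sub_one_le_mul (hq : 2 ≤ q) {b d t : ℕ} (hd : 0 < d) (hdt : 2 * d ≤ t)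
    (h : q ^ t - 1 ≤ b * (q ^ d - 1)) : q ^ (t - d) < b := by
  have hY : 2 ≤ q ^ d := hq.trans (Nat.le_self_pow hd.ne' q)
  have hYX : q ^ d ≤ q ^ (t - d) := Nat.pow_le_pow_right (by omega) (by omega)
  rw [show t = (t - d) + d by omega, pow_add] at h
  by_contra! hb
  have hXY : q ^ (t - d) * q ^ d - 1 ≤ q ^ (t - d) * (q ^ d - 1) :=
    h.trans (Nat.mul_le_mul_right _ hb)
  rw [Nat.mul_sub_one] at hXY
  have : 2 * q ^ (t - d) ≤ q ^ (t - d) * q ^ d := by nlinarith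
  omega

lemma injOn_mul_pow_mod_pow_sub_one (hq : 2 ≤ q) {b t : ℕ} (hb : 0 < b)
    (hbq : b ≤ q ^ ((t + 1) / 2)) :
    Set.InjOn (fun ℓ => b * q ^ ℓ % (q ^ t - 1)) (Set.Iio t) := by
  intro i hi j hj hij
  wlog hle : i ≤ j generalizing i j
  · exact (this hj hi hij.symm (le_of_not_ge hle)).symm
  by_contra hne
  simp only [Set.mem_Iio] at hi hj
  have he : q ^ t - 1 ∣ b * (q ^ (j - i) - 1) :=
    dvd_mul_pow_sub_one_of_modEq (by omega) (coprime_pow_sub_one (by omega) (by omega)) hle hij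
  have hdvd := dvd_mul_pow_gcd_sub_one he (Dvd.intro_left b rfl)
  set d := Nat.gcd (j - i) t
  have hd : 0 < d := Nat.gcd_pos_of_pos_left t (by omega)
  have hdt : 2 * d ≤ t := two_mul_le_of_dvd_of_lt_s16 (Nat.gcd_dvd_right (j - i) t)
    ((Nat.gcd_le_left t (by omega)).trans_lt (by omega))
  have hpos : 0 < b * (q ^ d - 1) := Nat.mul_pos hb (Nat.sub_pos_of_lt (Nat.one_lt_pow hd.ne' hq))
  have hlt := pow_sub_lt_of_pow_sub_one_le_mul hq hd hdt (Nat.le_of_dvd hpos hdvd)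
  have : q ^ ((t + 1) / 2) ≤ q ^ (t - d) := Nat.pow_le_pow_right (by omega) (by omega)
  omega

theorem ncard_cyclotomicCoset_pow_sub_one (hq : 2 ≤ q) {t b : ℕ} (ht : 0 < t) (hb : 0 < b)
    (hbq : b ≤ q ^ ((t + 1) / 2)) : (cyclotomicCoset q (q ^ t - 1) b).ncard = t := by
  rw [cyclotomicCoset_pow_sub_one_eq_image (by omega) ht, Set.ncard_coe_finset,
    Finset.card_image_of_injOn, Finset.card_range]
  simpa only [Finset.coe_range] using injOn_mul_pow_mod_pow_sub_one hq hb hbq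

end CyclotomicCoset

lemma Bval_le_pow_half {p : ℕ} (hp : 0 < p) {s : ℕ} (hs : 0 < s) (t : ℕ) :
    Bval p (s * t) s ≤ (p ^ s) ^ ((t + 1) / 2) := by
  unfold Bval
  rw [Nat.mul_div_cancel_left t hs]
  split_ifs with ht
  · obtain ⟨u, rfl⟩ := ht
    have h : s * (u + u) / (2 * s) = u := by
      apply Nat.div_eq_of_lt_le <;> ring_nf <;> omega
    rw [h, show (u + u + 1) / 2 = u by omega]
    omega
  · obtain ⟨u, rfl⟩ := Nat.not_even_iff_odd.mp ht
    have h : (s * (2 * u + 1) + 2 * s - 1) / (2 * s) = u + 1 := by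
      apply Nat.div_eq_of_lt_le <;> ring_nf <;> omega
    rw [h, show (2 * u + 1 + 1) / 2 = u + 1 by omega]
    have hq : 0 < p ^ s := Nat.pow_pos hp
    have := Nat.le_self_pow (n := u + 1) (by omega) (p ^ s)
    omega

theorem stmt_16_general (p s m : ℕ) (hp : p.Prime) (hs : 0 < s) (hm : 0 < m)
    (hsm : s ∣ m) (b : ℕ) (hb : 0 < b) (hbB : b ≤ Bval p m s) :
    Set.ncard { x : ℕ | ∃ ℓ : ℕ, x = b * p ^ (s * ℓ) % (p ^ m - 1) } = m / s := by
  obtain ⟨t, rfl⟩ := hsm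
  have ht : 0 < t := Nat.pos_of_mul_pos_left hm
  have hcoset : { x : ℕ | ∃ ℓ : ℕ, x = b * p ^ (s * ℓ) % (p ^ (s * t) - 1) } =
      cyclotomicCoset (p ^ s) ((p ^ s) ^ t - 1) b := by
    simp only [cyclotomicCoset, pow_mul]
  rw [hcoset, Nat.mul_div_cancel_left t hs]
  exact ncard_cyclotomicCoset_pow_sub_one (hp.two_le.trans (Nat.le_self_pow hs.ne' p)) ht hb
    (hbB.trans (Bval_le_pow_half hp.pos hs t))

/-- For `0 < b ≤ B(p,m,s)`, the cyclotomic coset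
`I_b = { b·p^{sℓ} mod (p^m - 1) : ℓ ≥ 0 }` has exactly `m/s` elements. -/
theorem stmt_16 (p s m : ℕ) (hp : p.Prime) (hs : 0 < s) (hm : 0 < m)
    (hsm : s ∣ m) (hne : s ≠ m) (b : ℕ) (hb : 0 < b) (hbB : b ≤ Bval p m s) :
    Set.ncard { x : ℕ | ∃ ℓ : ℕ, x = b * p ^ (s * ℓ) % (p ^ m - 1) } = m / s :=
  stmt_16_general p s m hp hs hm hsm b hb hbB
end

section
/- Let p be a prime and let s, m be positive integers such that s divides m and s ≠ m. Set n = p^m − 1. Let a be an integer with 0 < a < B(p,m,s) such that p^s does not divide a. Then a is the minimal element of its cyclotomic coset; that is, a·p^{sℓ} mod n ≥ a for every nonnegative integer ℓ. -/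
lemma Bval_mul_left_le {p s : ℕ} (hp : 0 < p) (hs : 0 < s) (t : ℕ) :
    Bval p (s * t) s ≤ (p ^ s) ^ ((t + 1) / 2) := by
  have hq : 0 < p ^ s := pow_pos hp s
  unfold Bval
  rw [Nat.mul_div_cancel_left t hs]
  split_ifs with ht
  · obtain ⟨w, rfl⟩ := ht
    rw [show s * (w + w) = 2 * s * w by ring, Nat.mul_div_cancel_left w (by omega),
      show (w + w + 1) / 2 = w by omega]
    exact Nat.sub_le _ _
  · obtain ⟨w, rfl⟩ := Nat.not_even_iff_odd.mp ht
    have hnum : s * (2 * w + 1) + 2 * s - 1 = 2 * s * (w + 1) + (s - 1) := by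
      have : s * (2 * w + 1) + 2 * s = 2 * s * (w + 1) + s := by ring
      omega
    rw [hnum, Nat.mul_add_div (by omega), Nat.div_eq_of_lt (by omega), add_zero,
      show (2 * w + 1 + 1) / 2 = w + 1 by omega]
    have : p ^ s ≤ (p ^ s) ^ (w + 1) := Nat.le_self_pow (by omega) _
    omega

section Rotation

variable {q : ℕ}

lemma mul_pow_mod_pow_sub_one_eq_mod (a ℓ t : ℕ) (hq : 0 < q) :
    a * q ^ ℓ % (q ^ t - 1) = a * q ^ (ℓ % t) % (q ^ t - 1) := by
  have hqt : q ^ t ≡ 1 [MOD q ^ t - 1] := Nat.modEq_sub (Nat.one_le_pow _ _ hq)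
  calc a * q ^ ℓ % (q ^ t - 1)
      = a * q ^ (ℓ % t) * (q ^ t) ^ (ℓ / t) % (q ^ t - 1) := by
        rw [mul_assoc, ← pow_mul, ← pow_add, Nat.mod_add_div]
    _ = a * q ^ (ℓ % t) * 1 ^ (ℓ / t) % (q ^ t - 1) := (hqt.pow _).mul_left _
    _ = a * q ^ (ℓ % t) % (q ^ t - 1) := by rw [one_pow, mul_one]

lemma mul_pow_modEq_rotate (hq : 0 < q) (a : ℕ) {j k t : ℕ} (hjk : k + j = t) :
    a * q ^ j ≡ a / q ^ k + a % q ^ k * q ^ j [MOD q ^ t - 1] := by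
  have hqt : q ^ t ≡ 1 [MOD q ^ t - 1] := Nat.modEq_sub (Nat.one_le_pow _ _ hq)
  calc a * q ^ j = a / q ^ k * q ^ t + a % q ^ k * q ^ j := by
        rw [← hjk, pow_add, ← mul_assoc, ← add_mul, Nat.div_add_mod']
    _ ≡ a / q ^ k * 1 + a % q ^ k * q ^ j [MOD q ^ t - 1] := (hqt.mul_left _).add_right _
    _ = a / q ^ k + a % q ^ k * q ^ j := by rw [mul_one]

lemma le_mul_pow_mod_pow_sub_one_of_pos_of_lt (hq : 2 ≤ q) {t a j : ℕ} (haq : a < q ^ ((t + 1) / 2))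
    (hqa : ¬ q ∣ a) (hj : 0 < j) (hjt : j < t) :
    a ≤ a * q ^ j % (q ^ t - 1) := by
  set k := t - j
  set u := a / q ^ k
  set v := a % q ^ k
  have hk : 0 < k := by omega
  have huv : q ^ k * u + v = a := Nat.div_add_mod a _
  have hv : v + 1 ≤ q ^ k := Nat.mod_lt a (by positivity)
  have hkj : q ^ k * q ^ j = q ^ t := by rw [← pow_add]; congr 1; omega
  have hvj : v * q ^ j + q ^ j ≤ q ^ t := by
    rw [← hkj, ← Nat.succ_mul]; exact Nat.mul_le_mul_right _ hv
  have hqj : q ≤ q ^ j := Nat.le_self_pow hj.ne' q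
  suffices hres : a ≤ u + v * q ^ j ∧ u + v * q ^ j < q ^ t - 1 by
    rw [mul_pow_modEq_rotate (by omega) a (by omega : k + j = t), Nat.mod_eq_of_lt hres.2]
    exact hres.1
  rcases Nat.eq_zero_or_pos u with hu | hu
  · have : v ≤ v * q ^ j := Nat.le_mul_of_pos_right v (by omega)
    simp only [hu, mul_zero, zero_add] at huv ⊢
    omega
  · have hka : q ^ k ≤ a := by nlinarith
    have hjc : (t + 1) / 2 ≤ j := by
      have := (Nat.pow_lt_pow_iff_right (by omega : 1 < q)).mp (hka.trans_lt haq)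
      omega
    have haj : a < q ^ j := haq.trans_le (Nat.pow_le_pow_right (by omega) hjc)
    have hv0 : 0 < v := Nat.pos_of_ne_zero fun h0 =>
      hqa ((dvd_pow_self q hk.ne').trans (Nat.dvd_of_mod_eq_zero h0))
    have : q ^ j ≤ v * q ^ j := Nat.le_mul_of_pos_left _ hv0
    have : u ≤ q ^ k * u := Nat.le_mul_of_pos_left _ (by positivity)
    omega

theorem le_mul_pow_mod_pow_sub_one (hq : 2 ≤ q) {t a : ℕ} (ht : 2 ≤ t)
    (haq : a < q ^ ((t + 1) / 2)) (hqa : ¬ q ∣ a) (ℓ : ℕ) :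
    a ≤ a * q ^ ℓ % (q ^ t - 1) := by
  rw [mul_pow_mod_pow_sub_one_eq_mod a ℓ t (by omega)]
  rcases Nat.eq_zero_or_pos (ℓ % t) with hj | hj
  · have han : a < q ^ t - 1 := by
      have : q ^ (t - 1) * q = q ^ t := by rw [← pow_succ]; congr 1; omega
      have : q ^ ((t + 1) / 2) ≤ q ^ (t - 1) := Nat.pow_le_pow_right (by omega) (by omega)
      have : 1 ≤ q ^ (t - 1) := Nat.one_le_pow _ _ (by omega)
      have : q ^ (t - 1) * 2 ≤ q ^ (t - 1) * q := Nat.mul_le_mul_left _ hq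
      omega
    rw [hj, pow_zero, mul_one, Nat.mod_eq_of_lt han]
  · exact le_mul_pow_mod_pow_sub_one_of_pos_of_lt hq haq hqa hj (Nat.mod_lt _ (by omega))

end Rotation

theorem stmt_18_general (p s m : ℕ) (hp : p.Prime) (hs : 0 < s) (hm : 0 < m)
    (hsm : s ∣ m) (hne : s ≠ m) (a : ℕ) (haB : a < Bval p m s)
    (hdvd : ¬ p ^ s ∣ a) :
    ∀ ℓ : ℕ, a ≤ a * p ^ (s * ℓ) % (p ^ m - 1) := by
  obtain ⟨t, rfl⟩ := hsm
  have ht : 2 ≤ t := by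
    rcases t with _ | _ | t
    · simp at hm
    · simp at hne
    · omega
  intro ℓ
  rw [pow_mul, pow_mul]
  exact le_mul_pow_mod_pow_sub_one (Nat.one_lt_pow hs.ne' hp.one_lt) ht
    (haB.trans_le (Bval_mul_left_le hp.pos hs t)) hdvd ℓ

/-- If `0 < a < B(p,m,s)` and `p^s ∤ a`, then `a` is the minimal element of
its cyclotomic coset with respect to `n = p^m - 1` and `s`. -/
theorem stmt_18 (p s m : ℕ) (hp : p.Prime) (hs : 0 < s) (hm : 0 < m)
    (hsm : s ∣ m) (hne : s ≠ m) (a : ℕ) (ha : 0 < a) (haB : a < Bval p m s)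
    (hdvd : ¬ p ^ s ∣ a) :
    ∀ ℓ : ℕ, a ≤ a * p ^ (s * ℓ) % (p ^ m - 1) :=
  stmt_18_general p s m hp hs hm hsm hne a haB hdvd
end
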